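/- Let k ≥ 3 be an integer. If T is a finite tree (with at least two vertices) whose locating chromatic number equals k, then Δ(T) ≤ 4·3^(k-3), where Δ(T) denotes the maximum degree of T. -/

import Mathlib

/-- A proper `k`-coloring of `G`: a function onto the `k` colors such that
adjacent vertices receive different colors. -/
def IsProperColoring {V : Type*} (G : SimpleGraph V) (k : ℕ) (f : V → Fin k) : Prop :=
  Function.Surjective f ∧ ∀ u v : V, G.Adj u v → f u ≠ f v

/-- The color code of a vertex `v`: its `i`-th coordinate is the distance from `v`
to the color class `f⁻¹(i)`. -/
noncomputable def colorCode {V : Type*} (G : SimpleGraph V) {k : ℕ} (f : V → Fin k)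
    (v : V) : Fin k → ℕ :=
  fun i => sInf {n : ℕ | ∃ u : V, f u = i ∧ G.dist v u = n}

/-- A locating `k`-coloring: a proper `k`-coloring in which distinct vertices have
distinct color codes. -/
def IsLocatingColoring {V : Type*} (G : SimpleGraph V) (k : ℕ) (f : V → Fin k) : Prop :=
  IsProperColoring G k f ∧ Function.Injective (colorCode G f)

/-- The locating chromatic number: the least `k` admitting a locating `k`-coloring. -/
noncomputable def locatingChromaticNumber {V : Type*} (G : SimpleGraph V) : ℕ :=
  sInf {k : ℕ | ∃ f : V → Fin k, IsLocatingColoring G k f}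

/-!
Let `x` be a vertex, `a` its color code and `S` the set of colors on its neighbours, `s = #S`;
then `f x ∉ S`, so `s < k`, and `a` is `0` at `f x` and `1` on `S`. Codes change by at most `1`
along an edge, so a neighbour of color `j` has code `0` at `j`, `1` at `f x`, in `{1, 2}` on
`S \ {j}` and in `[a i - 1, a i + 1]` at each of the other `k - 1 - s` colors `i`. Codes are
distinct, so each color of `S` occurs at most `2 ^ (s - 1) * 3 ^ (k - 1 - s)` times around `x`,
and `deg x ≤ s * 2 ^ (s - 1) * 3 ^ (k - 1 - s) ≤ 4 * 3 ^ (k - 3)`.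
-/

open Finset

lemma add_two_mul_two_pow_le (t : ℕ) : (t + 2) * 2 ^ (t + 2) ≤ 8 * 3 ^ t := by
  induction t with
  | zero => norm_num
  | succ t ih =>
    calc (t + 3) * 2 ^ (t + 3) = 2 * (t + 3) * 2 ^ (t + 2) := by ring
      _ ≤ 3 * (t + 2) * 2 ^ (t + 2) := Nat.mul_le_mul_right _ (by omega)
      _ ≤ 3 * (8 * 3 ^ t) := by rw [mul_assoc]; exact Nat.mul_le_mul_left 3 ih
      _ = 8 * 3 ^ (t + 1) := by ring

lemma mul_two_pow_mul_three_pow_le {s k : ℕ} (hs : s < k) :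
    s * 2 ^ s * 3 ^ (k - 1 - s) ≤ 8 * 3 ^ (k - 3) := by
  match s with
  | 0 => simp
  | 1 =>
    have : 3 ^ (k - 2) ≤ 3 ^ (k - 3 + 1) := Nat.pow_le_pow_right (by norm_num) (by omega)
    rw [pow_succ] at this
    rw [show k - 1 - 1 = k - 2 by omega]
    norm_num
    omega
  | t + 2 =>
    calc (t + 2) * 2 ^ (t + 2) * 3 ^ (k - 1 - (t + 2)) ≤ 8 * 3 ^ t * 3 ^ (k - 3 - t) := by
          rw [show k - 1 - (t + 2) = k - 3 - t by omega]
          exact Nat.mul_le_mul_right _ (add_two_mul_two_pow_le t)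
      _ = 8 * 3 ^ (k - 3) := by rw [mul_assoc, ← pow_add, Nat.add_sub_cancel' (by omega)]

lemma prod_le_two_pow_mul_three_pow {ι : Type*} [Fintype ι] [DecidableEq ι] {w : ι → ℕ}
    {c : ι} {S : Finset ι} (hc : c ∉ S) (hwc : w c ≤ 1) (hwS : ∀ i ∈ S, w i ≤ 2)
    (hw : ∀ i, w i ≤ 3) :
    ∏ i, w i ≤ 2 ^ #S * 3 ^ (Fintype.card ι - 1 - #S) := by
  have hcompl : #(insert c S)ᶜ = Fintype.card ι - 1 - #S := by
    rw [card_compl, card_insert_of_notMem hc]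
    omega
  rw [← prod_mul_prod_compl (insert c S), prod_insert hc, ← hcompl]
  calc (w c * ∏ i ∈ S, w i) * ∏ i ∈ (insert c S)ᶜ, w i
      ≤ 1 * 2 ^ #S * 3 ^ #(insert c S)ᶜ := by
        gcongr
        · exact prod_le_pow_card _ _ _ hwS
        · exact prod_le_pow_card _ _ _ fun i _ => hw i
    _ = 2 ^ #S * 3 ^ #(insert c S)ᶜ := by rw [one_mul]

section colorCode

variable {V : Type*} {G : SimpleGraph V} {k : ℕ} {f : V → Fin k}

lemma colorCode_le_dist (v : V) {u : V} {i : Fin k} (hu : f u = i) :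
    colorCode G f v i ≤ G.dist v u :=
  Nat.sInf_le ⟨u, hu, rfl⟩

lemma exists_dist_eq_colorCode (hf : Function.Surjective f) (v : V) (i : Fin k) :
    ∃ u, f u = i ∧ G.dist v u = colorCode G f v i := by
  obtain ⟨u, hu⟩ := hf i
  exact Nat.sInf_mem (s := {n | ∃ u, f u = i ∧ G.dist v u = n}) ⟨G.dist v u, u, hu, rfl⟩

@[simp]
lemma colorCode_self (v : V) : colorCode G f v (f v) = 0 :=
  Nat.le_zero.mp <| (colorCode_le_dist v rfl).trans_eq G.dist_self

lemma colorCode_pos (hf : Function.Surjective f) (hG : G.Connected) {v : V} {i : Fin k}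
    (h : f v ≠ i) : 0 < colorCode G f v i := by
  obtain ⟨u, rfl, hu⟩ := exists_dist_eq_colorCode (G := G) hf v i
  rw [← hu]
  exact hG.pos_dist_of_ne fun hvu => h (hvu ▸ rfl)

lemma colorCode_le_add_one_of_adj (hf : Function.Surjective f) {u v : V} (h : G.Adj u v)
    (i : Fin k) : colorCode G f u i ≤ colorCode G f v i + 1 := by
  obtain ⟨w, hw, hvw⟩ := exists_dist_eq_colorCode (G := G) hf v i
  calc colorCode G f u i ≤ G.dist u w := colorCode_le_dist u hw
    _ ≤ G.dist u v + G.dist v w := h.reachable.dist_triangle_left w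
    _ = colorCode G f v i + 1 := by rw [SimpleGraph.dist_eq_one_iff_adj.mpr h, hvw, add_comm]

lemma colorCode_mem_piFinset_of_adj (hf : Function.Surjective f) (hG : G.Connected) {x u : V}
    (h : G.Adj x u) :
    colorCode G f u ∈ Fintype.piFinset fun i => if i = f u then {0} else
      Icc (max 1 (colorCode G f x i - 1)) (colorCode G f x i + 1) := by
  rw [Fintype.mem_piFinset]
  intro i
  split_ifs with hi
  · simp [hi]
  · have := colorCode_pos (G := G) hf hG (Ne.symm hi)
    have := colorCode_le_add_one_of_adj hf h i
    have := colorCode_le_add_one_of_adj hf h.symm i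
    rw [mem_Icc]
    omega

end colorCode

namespace IsProperColoring

variable {V : Type*} {G : SimpleGraph V} {k : ℕ} {f : V → Fin k}

lemma colorCode_eq_one_of_adj (hf : IsProperColoring G k f) (hG : G.Connected) {x u : V}
    (h : G.Adj x u) : colorCode G f x (f u) = 1 := by
  have := colorCode_pos hf.1 hG (hf.2 x u h)
  have := colorCode_le_dist (G := G) x (rfl : f u = f u)
  rw [SimpleGraph.dist_eq_one_iff_adj.mpr h] at this
  omega

variable [G.LocallyFinite]

lemma color_notMem_image_neighborFinset (hf : IsProperColoring G k f) (x : V) :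
    f x ∉ (G.neighborFinset x).image f := by
  simp only [mem_image, SimpleGraph.mem_neighborFinset, not_exists, not_and]
  exact fun u h hu => hf.2 x u h hu.symm

lemma card_image_neighborFinset_lt (hf : IsProperColoring G k f) (x : V) :
    #((G.neighborFinset x).image f) < k := by
  have := card_le_univ (insert (f x) ((G.neighborFinset x).image f))
  rwa [card_insert_of_notMem (hf.color_notMem_image_neighborFinset x), Fintype.card_fin] at this

end IsProperColoring

namespace IsLocatingColoring

variable {V : Type*} {G : SimpleGraph V} {k : ℕ} {f : V → Fin k}

lemma of_bijective (hf : Function.Bijective f) (hG : G.Connected) : IsLocatingColoring G k f := by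
  refine ⟨⟨hf.2, fun u v h => hf.1.ne h.ne⟩, fun v w hvw => ?_⟩
  obtain ⟨u, hu, hwu⟩ := exists_dist_eq_colorCode (G := G) hf.2 w (f v)
  rw [← hvw, colorCode_self, hG.dist_eq_zero_iff] at hwu
  subst hwu
  exact hf.1 hu.symm

lemma exists_locatingChromaticNumber [Finite V] (hG : G.Connected) :
    ∃ f : V → Fin (locatingChromaticNumber G), IsLocatingColoring G _ f := by
  obtain ⟨n, ⟨e⟩⟩ := Finite.exists_equiv_fin V
  exact Nat.sInf_mem (s := {k | ∃ f : V → Fin k, IsLocatingColoring G k f})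
    ⟨n, e, of_bijective e.bijective hG⟩

variable [G.LocallyFinite]

/- `min (a i + 1) 3`, with `a` the code of `x`, counts the values the code of a neighbour of `x`
can take at a color `i` other than its own: `1` if `a i = 0`, `2` if `a i = 1`, `3` beyond. -/
lemma min_mul_card_filter_neighborFinset_le (hf : IsLocatingColoring G k f) (hG : G.Connected)
    (x : V) (j : Fin k) :
    min (colorCode G f x j + 1) 3 * #{u ∈ G.neighborFinset x | f u = j} ≤
      ∏ i, min (colorCode G f x i + 1) 3 := by
  set w := fun i => min (colorCode G f x i + 1) 3
  set box : Fin k → Finset ℕ := fun i => if i = j then {0} else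
    Icc (max 1 (colorCode G f x i - 1)) (colorCode G f x i + 1)
  have hmaps : ∀ u ∈ ({u ∈ G.neighborFinset x | f u = j} : Finset V),
      colorCode G f u ∈ Fintype.piFinset box := by
    intro u hu
    obtain ⟨hxu, rfl⟩ := mem_filter.mp hu
    exact colorCode_mem_piFinset_of_adj hf.1.1 hG ((G.mem_neighborFinset x u).mp hxu)
  have hbox : ∀ i ∈ univ.erase j, #(box i) = w i := by
    intro i hi
    simp only [box, w, if_neg (ne_of_mem_erase hi), Nat.card_Icc]
    omega
  calc w j * #{u ∈ G.neighborFinset x | f u = j}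
      ≤ w j * ∏ i, #(box i) := by
        gcongr
        exact (card_le_card_of_injOn _ hmaps hf.2.injOn).trans_eq (Fintype.card_piFinset box)
    _ = ∏ i, w i := by
        rw [← mul_prod_erase _ _ (mem_univ j), prod_congr rfl hbox,
          ← mul_prod_erase _ w (mem_univ j)]
        simp [box]

lemma two_mul_degree_le (hf : IsLocatingColoring G k f) (hG : G.Connected) (x : V) :
    2 * G.degree x ≤ #((G.neighborFinset x).image f) * 2 ^ #((G.neighborFinset x).image f) *
      3 ^ (k - 1 - #((G.neighborFinset x).image f)) := by
  set S := (G.neighborFinset x).image f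
  have hS : ∀ j ∈ S, colorCode G f x j = 1 := by
    intro j hj
    obtain ⟨u, hu, rfl⟩ := mem_image.mp hj
    exact hf.1.colorCode_eq_one_of_adj hG ((G.mem_neighborFinset x u).mp hu)
  have hprod : ∏ i, min (colorCode G f x i + 1) 3 ≤ 2 ^ #S * 3 ^ (k - 1 - #S) := by
    simpa using prod_le_two_pow_mul_three_pow (hf.1.color_notMem_image_neighborFinset x)
      (by simp) (fun i hi => by simp [hS i hi]) fun i => min_le_right _ 3
  calc 2 * G.degree x = ∑ j ∈ S, 2 * #{u ∈ G.neighborFinset x | f u = j} := by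
        rw [← mul_sum, ← card_eq_sum_card_fiberwise fun u hu => mem_image_of_mem f hu,
          G.card_neighborFinset_eq_degree]
    _ ≤ ∑ _j ∈ S, ∏ i, min (colorCode G f x i + 1) 3 := by
        refine sum_le_sum fun j hj => ?_
        simpa [hS j hj] using hf.min_mul_card_filter_neighborFinset_le hG x j
    _ ≤ #S * 2 ^ #S * 3 ^ (k - 1 - #S) := by
        rw [sum_const, smul_eq_mul, mul_assoc]
        gcongr

lemma degree_le (hf : IsLocatingColoring G k f) (hG : G.Connected) (x : V) :
    G.degree x ≤ 4 * 3 ^ (k - 3) := by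
  have := hf.two_mul_degree_le hG x
  have := mul_two_pow_mul_three_pow_le (hf.1.card_image_neighborFinset_lt x)
  omega

end IsLocatingColoring

theorem maxDegree_le_of_locatingChromaticNumber_general {V : Type*} [Fintype V]
    (G : SimpleGraph V) [DecidableRel G.Adj] (hT : G.IsTree) (k : ℕ)
    (h : locatingChromaticNumber G = k) :
    G.maxDegree ≤ 4 * 3 ^ (k - 3) := by
  obtain ⟨f, hf⟩ := IsLocatingColoring.exists_locatingChromaticNumber hT.connected
  subst h
  exact G.maxDegree_le_of_forall_degree_le _ fun x => hf.degree_le hT.connected x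

/-- Theorem 2.3: if `T` is a finite tree (with at least two vertices) whose locating
chromatic number equals `k ≥ 3`, then `Δ(T) ≤ 4 * 3^(k-3)`. -/
theorem maxDegree_le_of_locatingChromaticNumber {V : Type*} [Fintype V] [Nontrivial V]
    (G : SimpleGraph V) [DecidableRel G.Adj] (hT : G.IsTree) (k : ℕ) (hk : 3 ≤ k)
    (h : locatingChromaticNumber G = k) :
    G.maxDegree ≤ 4 * 3 ^ (k - 3) :=
  maxDegree_le_of_locatingChromaticNumber_general G hT k h
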